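/- arXiv:2404.15483 — 2 statements merged into one kernel-verified Lean document; each statement's English description precedes it below -/
import Mathlib

section
/- Suppose that for every acyclic concurrent stochastic Büchi game G' (countable states, countable Max action sets, finite Min action sets) and every ε > 0, Max has a 1-bit strategy σ' such that (1) σ' started in mode 0 is multiplicatively ε-optimal from every state, (2) all memory updates of σ' are Dirac, and (3) σ' is deterministic if G' is turn-based. Then for every concurrent stochastic Büchi game G (countable states, countable Max action sets, finite Min action sets) and every ε > 0, Max has a 1-bit Markov strategy σ such that (1) σ started with step counter 0 and bit 0 is multiplicatively ε-optimal from every state, (2) all memory updates of σ are Dirac, and (3) σ is deterministic if G is turn-based. -/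
open scoped ENNReal Classical
open MeasureTheory

/-- A concurrent stochastic game: a set of states `S`, for each state a nonempty
countable set of Max actions and a nonempty finite set of Min actions, and for each
state and action pair a probability distribution on successor states. -/
structure ConcurrentGame (S A B : Type) where
  actA : S → Set A
  actB : S → Set B
  actA_nonempty : ∀ s, (actA s).Nonempty
  actA_countable : ∀ s, (actA s).Countable
  actB_nonempty : ∀ s, (actB s).Nonempty
  actB_finite : ∀ s, (actB s).Finite
  trans : S → A → B → PMF S

namespace ConcurrentGame

/-- A history: the chronological list of (state, Max action, Min action) steps so far,
together with the current (final) state. -/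
abbrev Hist (S A B : Type) : Type := List (S × A × B) × S

/-- A play: an infinite sequence of (state, Max action, Min action) triples. -/
abbrev Play (S A B : Type) : Type := ℕ → S × A × B

/-- Plays carry the product (cylinder) sigma-algebra, each (countable, discrete)
factor carrying the discrete sigma-algebra. -/
instance playMeasurableSpace (S A B : Type) : MeasurableSpace (Play S A B) :=
  @MeasurableSpace.pi ℕ (fun _ => S × A × B) (fun _ => ⊤)

/-- The cylinder sigma-algebra on infinite state sequences. -/
def seqMS (S : Type) : MeasurableSpace (ℕ → S) :=
  @MeasurableSpace.pi ℕ (fun _ => S) (fun _ => ⊤)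

variable {S A B : Type}

/-- A Max strategy: a mixed action (supported on the legal Max actions at the final
state) for every history. -/
structure MaxStrategy (G : ConcurrentGame S A B) where
  toFun : Hist S A B → PMF A
  mem_actA : ∀ h : Hist S A B, ∀ a ∈ (toFun h).support, a ∈ G.actA h.2

/-- A Min strategy: a mixed action (supported on the legal Min actions at the final
state) for every history. -/
structure MinStrategy (G : ConcurrentGame S A B) where
  toFun : Hist S A B → PMF B
  mem_actB : ∀ h : Hist S A B, ∀ b ∈ (toFun h).support, b ∈ G.actB h.2

/-- The state at position `i` of a history with step list `l` and final state `s`. -/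
def stateAt (l : List (S × A × B)) (s : S) (i : ℕ) : S :=
  match l[i]? with
  | some x => x.1
  | none => s

/-- The first state of the step list `l`, or `s` if `l` is empty. -/
def headState (l : List (S × A × B)) (s : S) : S :=
  match l with
  | [] => s
  | x :: _ => x.1

/-- Shift a function on histories by prepending a fixed first step. -/
def shiftF {α : Type} (f : Hist S A B → α) (x : S × A × B) : Hist S A B → α :=
  fun h => f (x :: h.1, h.2)

/-- The probability that the play from `s0` under the given (raw) strategies follows
exactly the history with step list `l` and final state `s`. -/
noncomputable def histProb (G : ConcurrentGame S A B) :
    (Hist S A B → PMF A) → (Hist S A B → PMF B) → S → List (S × A × B) → S → ℝ≥0∞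
  | _, _, s0, [], s => if s = s0 then 1 else 0
  | f, g, s0, (s', a, b) :: l, s =>
    if s' = s0 then
      f ([], s0) a * g ([], s0) b * G.trans s0 a b (headState l s) *
        histProb G (shiftF f (s0, a, b)) (shiftF g (s0, a, b)) (headState l s) l s
    else 0

/-- The cylinder set of plays extending the history `(l, s)`. -/
def cylinder (l : List (S × A × B)) (s : S) : Set (Play S A B) :=
  {ω | (∀ i : Fin l.length, ω i = l.get i) ∧ (ω l.length).1 = s}

/-- `P` is the probability measure on plays induced by the initial state `s0` and the
strategies `σ` and `π` (characterized by its values on all cylinder sets; by the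
Ionescu–Tulcea theorem such a measure exists and is unique on the cylinder
sigma-algebra). -/
def Consistent (G : ConcurrentGame S A B) (s0 : S) (σ : G.MaxStrategy)
    (π : G.MinStrategy) (P : Measure (Play S A B)) : Prop :=
  IsProbabilityMeasure P ∧
    ∀ (l : List (S × A × B)) (s : S), P (cylinder l s) = G.histProb σ.toFun π.toFun s0 l s

/-- The value of state `s0` for objective `E`:
`sup` over Max strategies of `inf` over Min strategies of the probability of `E`. -/
noncomputable def val (G : ConcurrentGame S A B) (E : Set (Play S A B)) (s0 : S) : ℝ≥0∞ :=
  ⨆ σ : G.MaxStrategy, ⨅ π : G.MinStrategy,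
    ⨅ P : {P : Measure (Play S A B) // Consistent G s0 σ π P}, P.1 E

/-- The Büchi objective: visit the target set `T` infinitely often. -/
def buchi {S A B : Type} (T : Set S) : Set (Play S A B) :=
  {ω | ∀ n : ℕ, ∃ m, n ≤ m ∧ (ω m).1 ∈ T}

/-- The transience objective: every state occurs only finitely often. -/
def transient {S A B : Type} : Set (Play S A B) :=
  {ω | ∀ s : S, {n : ℕ | (ω n).1 = s}.Finite}

/-- The reachability objective: visit `T` at least once. -/
def reach {S A B : Type} (T : Set S) : Set (Play S A B) :=
  {ω | ∃ n : ℕ, (ω n).1 ∈ T}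

/-- Reach the state `t` while staying inside `L` before the visit. -/
def reachVia {S A B : Type} (L : Set S) (t : S) : Set (Play S A B) :=
  {ω | ∃ n : ℕ, (ω n).1 = t ∧ ∀ i < n, (ω i).1 ∈ L}

/-- A strategy based on a memory set `M`: a map choosing a mixed action from
(mode, state), and a (possibly randomized) memory update map. -/
structure MemoryStrategy (G : ConcurrentGame S A B) (M : Type) where
  act : M → S → PMF A
  upd : S → M → A → B → S → PMF M
  act_mem : ∀ m s, ∀ a ∈ (act m s).support, a ∈ G.actA s

variable {M : Type}

/-- The probability that the play from `s0` follows exactly the history with step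
list `l` and final state `s`, when Max plays the memory-based strategy `(act, upd)`
with current (private, possibly randomized) memory mode `m` and Min plays the raw
strategy `g`. The sum ranges over the possible next memory modes. -/
noncomputable def histProbMem (G : ConcurrentGame S A B) (act : M → S → PMF A)
    (upd : S → M → A → B → S → PMF M) :
    (Hist S A B → PMF B) → M → S → List (S × A × B) → S → ℝ≥0∞
  | _, _, s0, [], s => if s = s0 then 1 else 0
  | g, m, s0, (s', a, b) :: l, s =>
    if s' = s0 then
      act m s0 a * g ([], s0) b * G.trans s0 a b (headState l s) *
        ∑' m' : M, upd s0 m a b (headState l s) m' *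
          histProbMem G act upd (shiftF g (s0, a, b)) m' (headState l s) l s
    else 0

/-- `P` is the probability measure on plays induced by the initial state `s0`, the
memory-based Max strategy `τ` with initial mode `m0`, and the Min strategy `π`
(characterized by its values on all cylinder sets). -/
def ConsistentMem (G : ConcurrentGame S A B) (s0 : S) (τ : MemoryStrategy G M)
    (m0 : M) (π : G.MinStrategy) (P : Measure (Play S A B)) : Prop :=
  IsProbabilityMeasure P ∧
    ∀ (l : List (S × A × B)) (s : S),
      P (cylinder l s) = histProbMem G τ.act τ.upd π.toFun m0 s0 l s

/-- All memory updates are Dirac (deterministic). -/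
def MemoryStrategy.DiracUpdates {G : ConcurrentGame S A B} (τ : MemoryStrategy G M) : Prop :=
  ∀ s m a b s', ∃ m', τ.upd s m a b s' = PMF.pure m'

/-- All chosen mixed actions are Dirac, i.e. the strategy is deterministic. -/
def MemoryStrategy.Deterministic {G : ConcurrentGame S A B} (τ : MemoryStrategy G M) : Prop :=
  ∀ m s, ∃ a, τ.act m s = PMF.pure a

/-- For memory of the form `ℕ × F`: the first component is a step counter,
deterministically incremented by 1 at every step. -/
def MemoryStrategy.StepCounter {G : ConcurrentGame S A B} {F : Type}
    (τ : MemoryStrategy G (ℕ × F)) : Prop :=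
  ∀ s m a b s', ∀ m' ∈ (τ.upd s m a b s').support, m'.1 = m.1 + 1

/-- A deterministic strategy: every chosen mixed action is Dirac. -/
def MaxStrategy.Deterministic {G : ConcurrentGame S A B} (σ : G.MaxStrategy) : Prop :=
  ∀ h, ∃ a, σ.toFun h = PMF.pure a

/-- A memoryless strategy: the chosen mixed action depends only on the current state. -/
def MaxStrategy.Memoryless {G : ConcurrentGame S A B} (σ : G.MaxStrategy) : Prop :=
  ∀ h h' : Hist S A B, h.2 = h'.2 → σ.toFun h = σ.toFun h'

/-- A Markov strategy: the chosen mixed action depends only on the current state and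
the number of elapsed steps. -/
def MaxStrategy.IsMarkov {G : ConcurrentGame S A B} (σ : G.MaxStrategy) : Prop :=
  ∀ h h' : Hist S A B, h.1.length = h'.1.length → h.2 = h'.2 → σ.toFun h = σ.toFun h'

/-- Turn-based: in every state, the transition distribution depends on only one
player's action. -/
def TurnBased (G : ConcurrentGame S A B) : Prop :=
  ∀ s : S,
    (∀ a ∈ G.actA s, ∀ a' ∈ G.actA s, ∀ b ∈ G.actB s, G.trans s a b = G.trans s a' b) ∨
    (∀ a ∈ G.actA s, ∀ b ∈ G.actB s, ∀ b' ∈ G.actB s, G.trans s a b = G.trans s a b')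

/-- Acyclic: no play can visit any state more than once, i.e. there is no cycle of
legal transitions. -/
def Acyclic (G : ConcurrentGame S A B) : Prop :=
  ∀ (n : ℕ) (f : ℕ → S) (a : ℕ → A) (b : ℕ → B),
    (∀ i ≤ n, a i ∈ G.actA (f i) ∧ b i ∈ G.actB (f i) ∧
      f (i + 1) ∈ (G.trans (f i) (a i) (b i)).support) →
    f (n + 1) ≠ f 0

end ConcurrentGame

/-!
Recording the step counter in the state turns a game `G` into the acyclic game
`G.unfolding` on `S × ℕ`, with the same actions and transitions. Plays of `G` and of the
unfolding correspond by adding or forgetting the counter, which preserves the probability of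
every cylinder and hence of the Büchi objective. Every strategy of `G` can be played in the
unfolding, so the value of `s₀` is at most that of `(s₀, 0)`; conversely, a 1-bit strategy of
the unfolding is, read in `G`, a 1-bit Markov strategy with the same guarantees.
-/

lemma PMF.tsum_map_mul {α β : Type*} (p : PMF α) (f : α → β) (g : β → ℝ≥0∞) :
    ∑' b, p.map f b * g b = ∑' a, p a * g (f a) := by
  simp_rw [PMF.map_apply, ← ENNReal.tsum_mul_right]
  rw [ENNReal.tsum_comm]
  refine tsum_congr fun a => ?_
  rw [tsum_eq_single (f a) fun b hb => by simp [hb]]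
  simp

lemma MeasureTheory.measure_iUnion_eq_of_null {α ι : Type*} [MeasurableSpace α] [Countable ι]
    (μ : Measure α) (t : ι → Set α) (i₀ : ι) (h : ∀ i ≠ i₀, μ (t i) = 0) :
    μ (⋃ i, t i) = μ (t i₀) :=
  le_antisymm ((measure_iUnion_le t).trans (tsum_eq_single i₀ h).le)
    (measure_mono (Set.subset_iUnion t i₀))

namespace ConcurrentGame

variable {S A B : Type}

def unstamp (x : (S × ℕ) × A × B) : S × A × B := (x.1.1, x.2)

def stampWith (l : List (S × A × B)) (c : Fin l.length → ℕ) : List ((S × ℕ) × A × B) :=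
  List.ofFn fun i => ((l[i].1, c i), l[i].2)

def stamp (k : ℕ) (l : List (S × A × B)) : List ((S × ℕ) × A × B) :=
  stampWith l fun i => i + k

def stampHist (k : ℕ) (h : Hist S A B) : Hist (S × ℕ) A B :=
  (stamp k h.1, (h.2, h.1.length + k))

def unstampHist (h : Hist (S × ℕ) A B) : Hist S A B :=
  (h.1.map unstamp, h.2.1)

@[simp] lemma length_stampWith (l : List (S × A × B)) (c : Fin l.length → ℕ) :
    (stampWith l c).length = l.length :=
  List.length_ofFn

@[simp] lemma getElem_stampWith (l : List (S × A × B)) (c : Fin l.length → ℕ) (i : ℕ)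
    (h : i < (stampWith l c).length) :
    (stampWith l c)[i] =
      (((l[i]'(by simpa using h)).1, c ⟨i, by simpa using h⟩), (l[i]'(by simpa using h)).2) :=
  List.getElem_ofFn h

@[simp] lemma map_unstamp_stampWith (l : List (S × A × B)) (c : Fin l.length → ℕ) :
    (stampWith l c).map unstamp = l := by
  simp [stampWith, List.map_ofFn, Function.comp_def, unstamp]

@[simp] lemma length_stamp (k : ℕ) (l : List (S × A × B)) : (stamp k l).length = l.length :=
  length_stampWith l _

@[simp] lemma getElem_stamp (k : ℕ) (l : List (S × A × B)) (i : ℕ)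
    (h : i < (stamp k l).length) :
    (stamp k l)[i] = (((l[i]'(by simpa using h)).1, i + k), (l[i]'(by simpa using h)).2) :=
  getElem_stampWith l _ i h

@[simp] lemma map_unstamp_stamp (k : ℕ) (l : List (S × A × B)) : (stamp k l).map unstamp = l :=
  map_unstamp_stampWith l _

@[simp] lemma stamp_nil (k : ℕ) : stamp k ([] : List (S × A × B)) = [] := rfl

@[simp] lemma stamp_cons (k : ℕ) (s : S) (a : A) (b : B) (l : List (S × A × B)) :
    stamp k ((s, a, b) :: l) = ((s, k), a, b) :: stamp (k + 1) l := by
  refine List.ext_getElem (by simp) fun i h _ => ?_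
  cases i <;> simp [Nat.add_right_comm, Nat.add_assoc]

lemma eq_stamp_of_getElem {k : ℕ} {l : List ((S × ℕ) × A × B)}
    (h : ∀ i (hi : i < l.length), l[i].1.2 = i + k) : l = stamp k (l.map unstamp) :=
  List.ext_getElem (by simp) fun i hi _ => by simp [unstamp, ← h i hi]

@[simp] lemma stampHist_nil (k : ℕ) (s : S) :
    stampHist k (([] : List (S × A × B)), s) = ([], (s, k)) := by
  simp [stampHist, stamp, stampWith]

@[simp] lemma unstampHist_stampHist (k : ℕ) (h : Hist S A B) :
    unstampHist (stampHist k h) = h := by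
  simp [unstampHist, stampHist]

lemma headState_stamp (k : ℕ) (l : List (S × A × B)) (s : S) :
    headState (stamp k l) (s, l.length + k) = (headState l s, k) := by
  rcases l with _ | ⟨⟨s', a, b⟩, l⟩ <;> simp [headState]

lemma shiftF_comp_stampHist {α : Type} (f : Hist (S × ℕ) A B → α) (k : ℕ) (s : S) (a : A)
    (b : B) :
    shiftF f ((s, k), a, b) ∘ stampHist (k + 1) = shiftF (f ∘ stampHist k) (s, a, b) := by
  funext h
  simp [shiftF, stampHist, Nat.add_right_comm, Nat.add_assoc]

lemma cons_mem_range_stampHist {k : ℕ} {t : List ((S × ℕ) × A × B)} {s' : S × ℕ}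
    (h : (t, s') ∈ Set.range (stampHist (k + 1))) (s : S) (a : A) (b : B) :
    (((s, k), a, b) :: t, s') ∈ Set.range (stampHist k) := by
  obtain ⟨⟨l, s₀⟩, hl⟩ := h
  simp only [stampHist, Prod.mk.injEq] at hl
  obtain ⟨rfl, rfl⟩ := hl
  exact ⟨((s, a, b) :: l, s₀), by simp [stampHist, Nat.add_right_comm, Nat.add_assoc]⟩

noncomputable def unfolding (G : ConcurrentGame S A B) : ConcurrentGame (S × ℕ) A B where
  actA p := G.actA p.1
  actB p := G.actB p.1
  actA_nonempty p := G.actA_nonempty p.1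
  actA_countable p := G.actA_countable p.1
  actB_nonempty p := G.actB_nonempty p.1
  actB_finite p := G.actB_finite p.1
  trans p a b := (G.trans p.1 a b).map fun s' => (s', p.2 + 1)

variable {G : ConcurrentGame S A B} {M : Type}

lemma unfolding_trans_apply (s : S) (k : ℕ) (a : A) (b : B) (s' : S) :
    G.unfolding.trans (s, k) a b (s', k + 1) = G.trans s a b s' := by
  rw [unfolding, PMF.map_apply, tsum_eq_single s' fun x hx => by simp [Ne.symm hx]]
  simp

lemma snd_eq_of_unfolding_trans_ne_zero {p q : S × ℕ} {a : A} {b : B}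
    (h : G.unfolding.trans p a b q ≠ 0) : q.2 = p.2 + 1 := by
  obtain ⟨s', -, rfl⟩ := (PMF.mem_support_map_iff _ _ _).1 h
  rfl

lemma unfolding_acyclic : G.unfolding.Acyclic := by
  intro n f a b hf hcycle
  have hclock : ∀ i ≤ n + 1, (f i).2 = (f 0).2 + i := by
    intro i
    induction i with
    | zero => simp
    | succ i ih =>
      intro hi
      rw [snd_eq_of_unfolding_trans_ne_zero (hf i (by omega)).2.2, ih (by omega)]
      rfl
  have := hclock (n + 1) le_rfl
  rw [hcycle] at this
  omega

lemma unfolding_turnBased (hG : G.TurnBased) : G.unfolding.TurnBased := by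
  intro p
  rcases hG p.1 with hA | hB
  · exact Or.inl fun a ha a' ha' b hb => congrArg (PMF.map _) (hA a ha a' ha' b hb)
  · exact Or.inr fun a ha b hb b' hb' => congrArg (PMF.map _) (hB a ha b hb b' hb')

def MaxStrategy.toUnfolding (σ : G.MaxStrategy) : G.unfolding.MaxStrategy :=
  ⟨σ.toFun ∘ unstampHist, fun h => σ.mem_actA (unstampHist h)⟩

def MinStrategy.toUnfolding (π : G.MinStrategy) : G.unfolding.MinStrategy :=
  ⟨π.toFun ∘ unstampHist, fun h => π.mem_actB (unstampHist h)⟩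

def MinStrategy.ofUnfolding (π : G.unfolding.MinStrategy) : G.MinStrategy :=
  ⟨π.toFun ∘ stampHist 0, fun h => π.mem_actB (stampHist 0 h)⟩

noncomputable def MemoryStrategy.ofUnfolding (τ : MemoryStrategy G.unfolding M) :
    MemoryStrategy G (ℕ × M) where
  act m s := τ.act m.2 (s, m.1)
  upd s m a b s' := (τ.upd (s, m.1) m.2 a b (s', m.1 + 1)).map fun x => (m.1 + 1, x)
  act_mem m s := τ.act_mem m.2 (s, m.1)

namespace MemoryStrategy

variable {τ : MemoryStrategy G.unfolding M}

lemma ofUnfolding_stepCounter : τ.ofUnfolding.StepCounter := by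
  intro s m a b s' m' hm'
  obtain ⟨x, -, rfl⟩ := (PMF.mem_support_map_iff _ _ _).1 hm'
  rfl

lemma DiracUpdates.ofUnfolding (hτ : τ.DiracUpdates) : τ.ofUnfolding.DiracUpdates := by
  intro s m a b s'
  obtain ⟨m', hm'⟩ := hτ (s, m.1) m.2 a b (s', m.1 + 1)
  exact ⟨(m.1 + 1, m'), by simp [MemoryStrategy.ofUnfolding, hm', PMF.pure_map]⟩

lemma Deterministic.ofUnfolding (hτ : τ.Deterministic) : τ.ofUnfolding.Deterministic :=
  fun m s => hτ m.2 (s, m.1)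

end MemoryStrategy

lemma histProb_unfolding_ne_zero {f : Hist (S × ℕ) A B → PMF A} {g : Hist (S × ℕ) A B → PMF B}
    {p : S × ℕ} {l : List ((S × ℕ) × A × B)} {s : S × ℕ}
    (h : histProb G.unfolding f g p l s ≠ 0) : (l, s) ∈ Set.range (stampHist p.2) := by
  induction l generalizing f g p with
  | nil =>
    obtain rfl : s = p := by by_contra hs; simp [histProb, hs] at h
    exact ⟨([], s.1), by simp [stampHist]⟩
  | cons x t ih =>
    obtain ⟨q, a, b⟩ := x
    by_cases hq : q = p
    · subst hq
      simp only [histProb, if_pos, ne_eq, mul_eq_zero, not_or] at h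
      have := ih h.2
      rw [snd_eq_of_unfolding_trans_ne_zero h.1.2] at this
      exact cons_mem_range_stampHist this q.1 a b
    · simp [histProb, hq] at h

lemma histProbMem_unfolding_ne_zero {act : M → S × ℕ → PMF A}
    {upd : S × ℕ → M → A → B → S × ℕ → PMF M} {g : Hist (S × ℕ) A B → PMF B} {m : M}
    {p : S × ℕ} {l : List ((S × ℕ) × A × B)} {s : S × ℕ}
    (h : histProbMem G.unfolding act upd g m p l s ≠ 0) : (l, s) ∈ Set.range (stampHist p.2) := by
  induction l generalizing g m p with
  | nil =>
    obtain rfl : s = p := by by_contra hs; simp [histProbMem, hs] at h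
    exact ⟨([], s.1), by simp [stampHist]⟩
  | cons x t ih =>
    obtain ⟨q, a, b⟩ := x
    by_cases hq : q = p
    · subst hq
      simp only [histProbMem, if_pos, ne_eq, mul_eq_zero, not_or, ENNReal.tsum_eq_zero,
        not_forall] at h
      obtain ⟨⟨-, htrans⟩, m', hm'⟩ := h
      have := ih hm'.2
      rw [snd_eq_of_unfolding_trans_ne_zero htrans] at this
      exact cons_mem_range_stampHist this q.1 a b
    · simp [histProbMem, hq] at h

lemma histProb_unfolding_stamp (f : Hist (S × ℕ) A B → PMF A) (g : Hist (S × ℕ) A B → PMF B)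
    (k : ℕ) (s₀ : S) (l : List (S × A × B)) (s : S) :
    histProb G.unfolding f g (s₀, k) (stamp k l) (s, l.length + k) =
      histProb G (f ∘ stampHist k) (g ∘ stampHist k) s₀ l s := by
  induction l generalizing f g k s₀ with
  | nil => simp [histProb]
  | cons x t ih =>
    obtain ⟨q, a, b⟩ := x
    rw [stamp_cons, List.length_cons, Nat.add_right_comm, Nat.add_assoc]
    by_cases hq : q = s₀
    · subst hq
      simp only [histProb, if_pos, headState_stamp, unfolding_trans_apply, ih,
        shiftF_comp_stampHist, Function.comp_apply, stampHist_nil]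
    · simp [histProb, hq]

lemma histProbMem_unfolding_stamp (τ : MemoryStrategy G.unfolding M) (g : Hist (S × ℕ) A B → PMF B)
    (k : ℕ) (m : M) (s₀ : S) (l : List (S × A × B)) (s : S) :
    histProbMem G.unfolding τ.act τ.upd g m (s₀, k) (stamp k l) (s, l.length + k) =
      histProbMem G τ.ofUnfolding.act τ.ofUnfolding.upd (g ∘ stampHist k) (k, m) s₀ l s := by
  induction l generalizing g k m s₀ with
  | nil => simp [histProbMem]
  | cons x t ih =>
    obtain ⟨q, a, b⟩ := x
    rw [stamp_cons, List.length_cons, Nat.add_right_comm, Nat.add_assoc]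
    by_cases hq : q = s₀
    · subst hq
      simp only [histProbMem, if_pos, headState_stamp, unfolding_trans_apply, ih,
        shiftF_comp_stampHist, MemoryStrategy.ofUnfolding, PMF.tsum_map_mul, Function.comp_apply,
        stampHist_nil]
    · simp [histProbMem, hq]

def stampPlay (ω : Play S A B) : Play (S × ℕ) A B := fun n => (((ω n).1, n), (ω n).2)

def unstampPlay (ω : Play (S × ℕ) A B) : Play S A B := fun n => unstamp (ω n)

lemma measurable_play_map {S' A' B' : Type} (φ : ℕ → S × A × B → S' × A' × B') :
    Measurable fun (ω : Play S A B) n => φ n (ω n) :=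
  @measurable_pi_lambda _ _ _ _ (fun _ => ⊤) _ fun n =>
    (@measurable_from_top _ _ ⊤ (φ n)).comp (@measurable_pi_apply _ _ (fun _ => ⊤) n)

lemma measurable_stampPlay : Measurable (stampPlay : Play S A B → Play (S × ℕ) A B) :=
  measurable_play_map fun n x => ((x.1, n), x.2)

lemma measurable_unstampPlay : Measurable (unstampPlay : Play (S × ℕ) A B → Play S A B) :=
  measurable_play_map fun _ => unstamp

lemma measurableSet_play_apply_mem (n : ℕ) (t : Set (S × A × B)) :
    MeasurableSet {ω : Play S A B | ω n ∈ t} :=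
  @measurable_pi_apply ℕ (fun _ => S × A × B) (fun _ => ⊤) n t trivial

lemma measurableSet_cylinder (l : List (S × A × B)) (s : S) :
    MeasurableSet (cylinder l s) := by
  have : cylinder l s = (⋂ i : Fin l.length, {ω | ω i ∈ ({l.get i} : Set _)}) ∩
      {ω | ω l.length ∈ Prod.fst ⁻¹' {s}} := by
    ext ω
    simp [cylinder]
  rw [this]
  exact .inter (.iInter fun i => measurableSet_play_apply_mem _ _)
    (measurableSet_play_apply_mem _ _)

lemma measurableSet_buchi (T : Set S) : MeasurableSet (buchi T : Set (Play S A B)) := by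
  have : (buchi T : Set (Play S A B)) =
      ⋂ n : ℕ, ⋃ m : ℕ, ⋃ (_ : n ≤ m), {ω | ω m ∈ Prod.fst ⁻¹' T} := by
    ext ω
    simp [buchi]
  rw [this]
  exact .iInter fun n => .iUnion fun m => .iUnion fun _ => measurableSet_play_apply_mem _ _

lemma mem_cylinder {ω : Play S A B} {l : List (S × A × B)} {s : S} :
    ω ∈ cylinder l s ↔ (∀ i (h : i < l.length), ω i = l[i]) ∧ (ω l.length).1 = s := by
  simp [cylinder, Fin.forall_iff]

lemma stampPlay_preimage_cylinder_stamp (l : List (S × A × B)) (s : S) :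
    stampPlay ⁻¹' cylinder (stamp 0 l) (s, l.length) = cylinder l s := by
  ext ω
  simp [mem_cylinder, stampPlay, Prod.ext_iff]

lemma mem_range_stampHist_of_stampPlay_mem_cylinder {ω : Play S A B}
    {l : List ((S × ℕ) × A × B)} {s : S × ℕ} (h : stampPlay ω ∈ cylinder l s) :
    (l, s) ∈ Set.range (stampHist 0) := by
  rw [mem_cylinder] at h
  refine ⟨(l.map unstamp, s.1), ?_⟩
  have hl : l = stamp 0 (l.map unstamp) :=
    eq_stamp_of_getElem fun i hi => by rw [← h.1 i hi]; rfl
  rw [stampHist, ← hl, ← h.2]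
  simp [stampPlay]

-- Only the counters are enumerated: the action sets may be uncountable.
lemma unstampPlay_preimage_cylinder (l : List (S × A × B)) (s : S) :
    unstampPlay ⁻¹' cylinder l s =
      ⋃ q : (Fin l.length → ℕ) × ℕ, cylinder (stampWith l q.1) (s, q.2) := by
  ext ω
  simp only [Set.mem_preimage, Set.mem_iUnion, mem_cylinder, length_stampWith, getElem_stampWith]
  constructor
  · rintro ⟨hl, hs⟩
    refine ⟨(fun i => (ω i).1.2, (ω l.length).1.2), fun i hi => ?_, ?_⟩ <;>
      simp [← hl, ← hs, unstampPlay, unstamp]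
  · rintro ⟨q, hl, hs⟩
    exact ⟨fun i hi => by simp [unstampPlay, unstamp, hl i hi], by simp [unstampPlay, unstamp, hs]⟩

lemma eq_of_stampWith_mem_range_stampHist {l : List (S × A × B)} {c : Fin l.length → ℕ}
    {s : S} {j : ℕ} (h : (stampWith l c, (s, j)) ∈ Set.range (stampHist 0)) :
    (c, j) = (fun i : Fin l.length => (i : ℕ), l.length) := by
  obtain ⟨⟨l₀, s₀⟩, h⟩ := h
  simp only [stampHist, Prod.mk.injEq, Nat.add_zero] at h
  obtain ⟨hl, -, rfl⟩ := h
  obtain rfl : l₀ = l := by simpa using congrArg (List.map unstamp) hl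
  refine Prod.ext (funext fun i => ?_) rfl
  simpa using (congrArg (fun l' => (l'[i]?).map fun x => x.1.2) hl).symm

lemma measure_unstampPlay_preimage_cylinder {P : Measure (Play (S × ℕ) A B)}
    (hP : ∀ l s, P (cylinder l s) ≠ 0 → (l, s) ∈ Set.range (stampHist 0))
    (l : List (S × A × B)) (s : S) :
    P (unstampPlay ⁻¹' cylinder l s) = P (cylinder (stamp 0 l) (s, l.length)) := by
  rw [unstampPlay_preimage_cylinder,
    measure_iUnion_eq_of_null P _ (fun i : Fin l.length => (i : ℕ), l.length)]
  · rfl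
  · intro q hq
    by_contra hne
    exact hq (eq_of_stampWith_mem_range_stampHist (hP _ _ hne))

lemma Consistent.map_unstampPlay {σ : G.MaxStrategy} {π : G.unfolding.MinStrategy} {s₀ : S}
    {P : Measure (Play (S × ℕ) A B)} (hP : Consistent G.unfolding (s₀, 0) σ.toUnfolding π P) :
    Consistent G s₀ σ π.ofUnfolding (P.map unstampPlay) := by
  have := hP.1
  refine ⟨Measure.isProbabilityMeasure_map measurable_unstampPlay.aemeasurable, fun l s => ?_⟩
  have hnull : ∀ l' s', P (cylinder l' s') ≠ 0 → (l', s') ∈ Set.range (stampHist 0) :=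
    fun l' s' h => histProb_unfolding_ne_zero (hP.2 l' s' ▸ h)
  rw [Measure.map_apply measurable_unstampPlay (measurableSet_cylinder l s),
    measure_unstampPlay_preimage_cylinder hnull, hP.2]
  refine (histProb_unfolding_stamp σ.toUnfolding.toFun π.toFun 0 s₀ l s).trans ?_
  congr 1
  funext h
  simp [MaxStrategy.toUnfolding]

lemma ConsistentMem.map_stampPlay {τ : MemoryStrategy G.unfolding M} {m : M} {π : G.MinStrategy}
    {s₀ : S} {P : Measure (Play S A B)} (hP : ConsistentMem G s₀ τ.ofUnfolding (0, m) π P) :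
    ConsistentMem G.unfolding (s₀, 0) τ m π.toUnfolding (P.map stampPlay) := by
  have := hP.1
  refine ⟨Measure.isProbabilityMeasure_map measurable_stampPlay.aemeasurable, fun l' s' => ?_⟩
  rw [Measure.map_apply measurable_stampPlay (measurableSet_cylinder l' s')]
  by_cases h : (l', s') ∈ Set.range (stampHist 0)
  · obtain ⟨⟨l, s⟩, hl⟩ := h
    simp only [stampHist, Prod.mk.injEq, Nat.add_zero] at hl
    obtain ⟨rfl, rfl⟩ := hl
    rw [stampPlay_preimage_cylinder_stamp, hP.2]
    refine Eq.trans ?_ (histProbMem_unfolding_stamp τ π.toUnfolding.toFun 0 m s₀ l s).symm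
    congr 1
    funext h
    simp [MinStrategy.toUnfolding]
  · have hempty : stampPlay ⁻¹' cylinder l' s' = ∅ := Set.eq_empty_of_forall_notMem
      fun ω hω => h (mem_range_stampHist_of_stampPlay_mem_cylinder hω)
    rw [hempty, measure_empty]
    by_contra hne
    exact h (histProbMem_unfolding_ne_zero (Ne.symm hne))

lemma val_le_val_unfolding {E : Set (Play S A B)} (hE : MeasurableSet E) (s₀ : S) :
    val G E s₀ ≤ val G.unfolding (unstampPlay ⁻¹' E) (s₀, 0) :=
  iSup_le fun σ => le_iSup_of_le σ.toUnfolding <| le_iInf fun π => le_iInf fun P =>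
    iInf_le_of_le π.ofUnfolding <| iInf_le_of_le ⟨_, P.2.map_unstampPlay⟩
      (Measure.map_apply measurable_unstampPlay hE).le

/-- **Reduction from general to acyclic Büchi games.**
If in every acyclic Büchi game Max has, for every `ε > 0`, a 1-bit strategy with
Dirac updates that is multiplicatively ε-optimal from every state when started in
mode `0` (deterministic if the game is turn-based), then in every Büchi game Max
has, for every `ε > 0`, a 1-bit Markov strategy with Dirac updates that is
multiplicatively ε-optimal from every state when started with step counter `0` and
bit `0` (deterministic if the game is turn-based). -/
theorem acyclic_reduction
    (hyp : ∀ (S' A' B' : Type) [Countable S'] (G' : ConcurrentGame S' A' B')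
        (T' : Set S'), G'.Acyclic → ∀ ε : ℝ≥0∞, 0 < ε →
      ∃ τ : MemoryStrategy G' Bool,
        τ.DiracUpdates ∧
        (∀ (s0 : S') (π : G'.MinStrategy) (P : Measure (Play S' A' B')),
          ConsistentMem G' s0 τ false π P →
            (1 - ε) * val G' (buchi T') s0 ≤ P (buchi T')) ∧
        (G'.TurnBased → τ.Deterministic)) :
    ∀ (S A B : Type) [Countable S] (G : ConcurrentGame S A B) (T : Set S)
      (ε : ℝ≥0∞), 0 < ε →
      ∃ τ : MemoryStrategy G (ℕ × Bool),
        τ.StepCounter ∧ τ.DiracUpdates ∧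
        (∀ (s0 : S) (π : G.MinStrategy) (P : Measure (Play S A B)),
          ConsistentMem G s0 τ (0, false) π P →
            (1 - ε) * val G (buchi T) s0 ≤ P (buchi T)) ∧
        (G.TurnBased → τ.Deterministic) := by
  intro S A B _ G T ε hε
  obtain ⟨τ, hτ_dirac, hτ_opt, hτ_det⟩ :=
    hyp (S × ℕ) A B G.unfolding (Prod.fst ⁻¹' T) unfolding_acyclic ε hε
  refine ⟨τ.ofUnfolding, MemoryStrategy.ofUnfolding_stepCounter, hτ_dirac.ofUnfolding,
    fun s₀ π P hP => ?_, fun hG => (hτ_det (unfolding_turnBased hG)).ofUnfolding⟩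
  calc (1 - ε) * val G (buchi T) s₀
      ≤ (1 - ε) * val G.unfolding (buchi (Prod.fst ⁻¹' T)) (s₀, 0) :=
        mul_le_mul_right (val_le_val_unfolding (measurableSet_buchi T) s₀) _
    _ ≤ P.map stampPlay (buchi (Prod.fst ⁻¹' T)) := hτ_opt _ _ _ hP.map_stampPlay
    _ = P (buchi T) :=
        Measure.map_apply measurable_stampPlay (measurableSet_buchi (Prod.fst ⁻¹' T))

end ConcurrentGame
end

section
/- Let n ≥ 1 and let f : (0,1]^n → (0,1]^n be a continuous function. For every x ∈ (0,1)^n there exists y ∈ (0,1)^n such that for all i ∈ {1, …, n}: if f(y)_i > y_i then y_i > x_i, and if f(y)_i ≤ y_i then y_i = x_i. -/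
open Set Filter Topology

/-- Greedy step lemma: if `y ≥ x` lies in the open cube, all strictly raised
coordinates satisfy `y i < f y i`, and at most `k` coordinates are still at `x`,
then the desired point exists. Induction on `k`. -/
lemma continuous_increase_or_fix_aux (n : ℕ)
    (f : (Fin n → ℝ) → (Fin n → ℝ))
    (hcont : ContinuousOn f {y : Fin n → ℝ | ∀ i, y i ∈ Set.Ioc (0 : ℝ) 1})
    (x : Fin n → ℝ) (hx : ∀ i, x i ∈ Set.Ioo (0 : ℝ) 1) :
    ∀ k : ℕ, ∀ y : Fin n → ℝ, (∀ i, y i ∈ Set.Ioo (0 : ℝ) 1) →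
      (∀ i, x i ≤ y i) → (∀ i, x i < y i → y i < f y i) →
      (Finset.univ.filter (fun i => y i = x i)).card ≤ k →
      ∃ z : Fin n → ℝ, (∀ i, z i ∈ Set.Ioo (0 : ℝ) 1) ∧
        ∀ i, (z i < f z i → x i < z i) ∧ (f z i ≤ z i → z i = x i) := by
  intro k
  induction k with
  | zero =>
    intro y hy1 hy2 hy3 hcard
    by_cases hall : ∀ i, y i = x i → f y i ≤ x i
    · refine ⟨y, hy1, fun i => ⟨?_, ?_⟩⟩
      · intro hlt
        rcases (hy2 i).lt_or_eq with h | h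
        · exact h
        · have := hall i h.symm
          linarith
      · intro hle
        by_contra hne
        have : x i < y i := lt_of_le_of_ne (hy2 i) (Ne.symm hne)
        exact absurd (hy3 i this) (not_lt.2 hle)
    · push_neg at hall
      obtain ⟨j, hj1, _⟩ := hall
      have hj : j ∈ Finset.univ.filter (fun i => y i = x i) := by simp [hj1]
      have := Finset.card_pos.mpr ⟨j, hj⟩
      omega
  | succ k ih =>
    intro y hy1 hy2 hy3 hcard
    by_cases hall : ∀ i, y i = x i → f y i ≤ x i
    · refine ⟨y, hy1, fun i => ⟨?_, ?_⟩⟩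
      · intro hlt
        rcases (hy2 i).lt_or_eq with h | h
        · exact h
        · have := hall i h.symm
          linarith
      · intro hle
        by_contra hne
        have : x i < y i := lt_of_le_of_ne (hy2 i) (Ne.symm hne)
        exact absurd (hy3 i this) (not_lt.2 hle)
    · push_neg at hall
      obtain ⟨j, hj1, hj2⟩ := hall
      -- hj2 : x j < f y j
      set g : ℝ → (Fin n → ℝ) := fun t i => if i = j then x j + t else y i with hgdef
      have hg0 : g 0 = y := by
        funext i
        simp only [hgdef]
        by_cases h : i = j
        · simp [h, hj1]
        · simp [h]
      have hgc : Continuous g := by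
        apply continuous_pi
        intro i
        by_cases h : i = j <;> simp only [hgdef, h, if_true, if_false] <;> fun_prop
      have hxj := hx j
      set T : Set ℝ := Icc 0 (1 - x j) with hTdef
      have hmaps : Set.MapsTo g T {y : Fin n → ℝ | ∀ i, y i ∈ Set.Ioc (0 : ℝ) 1} := by
        intro t ht
        intro i
        by_cases h : i = j
        · simp only [hgdef, h, if_true]
          constructor
          · linarith [hxj.1, ht.1]
          · linarith [ht.2]
        · simp only [hgdef, h, if_false]
          exact ⟨(hy1 i).1, le_of_lt (hy1 i).2⟩
      have hFcont : ContinuousOn (fun t => f (g t)) T :=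
        hcont.comp hgc.continuousOn hmaps
      have h0T : (0 : ℝ) ∈ T := ⟨le_refl 0, by linarith [hxj.2]⟩
      have hFT : Filter.Tendsto (fun t => f (g t)) (nhdsWithin 0 T) (nhds (f y)) := by
        have := (hFcont 0 h0T)
        rw [ContinuousWithinAt, hg0] at this
        exact this
      have hIooT : Ioo (0 : ℝ) (1 - x j) ⊆ T := Ioo_subset_Icc_self
      have hl : Filter.Tendsto (fun t => f (g t)) (nhdsWithin 0 (Ioi (0:ℝ))) (nhds (f y)) := by
        rw [← nhdsWithin_Ioo_eq_nhdsGT (by linarith [hxj.2] : (0:ℝ) < 1 - x j)]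
        exact hFT.mono_left (nhdsWithin_mono _ hIooT)
      have hFi : ∀ i, Filter.Tendsto (fun t => f (g t) i)
          (nhdsWithin 0 (Ioi (0:ℝ))) (nhds (f y i)) :=
        fun i => (((continuous_apply i).tendsto (f y)).comp hl)
      have hlin : Filter.Tendsto (fun t : ℝ => x j + t)
          (nhdsWithin 0 (Ioi (0:ℝ))) (nhds (x j)) := by
        have : Filter.Tendsto (fun t : ℝ => x j + t) (nhds 0) (nhds (x j + 0)) :=
          (continuous_const.add continuous_id).tendsto 0
        rw [add_zero] at this
        exact this.mono_left nhdsWithin_le_nhds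
      have E1 : ∀ᶠ t in nhdsWithin 0 (Ioi (0:ℝ)), x j + t < f (g t) j :=
        hlin.eventually_lt (hFi j) hj2
      have E2 : ∀ᶠ t in nhdsWithin 0 (Ioi (0:ℝ)), x j + t < 1 :=
        hlin.eventually_lt_const hxj.2
      have E3 : ∀ᶠ t in nhdsWithin 0 (Ioi (0:ℝ)), ∀ i, x i < y i → y i < f (g t) i := by
        rw [Filter.eventually_all]
        intro i
        by_cases h : x i < y i
        · exact ((hFi i).eventually_const_lt (hy3 i h)).mono (fun t ht _ => ht)
        · exact Filter.Eventually.of_forall (fun t hc => absurd hc h)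
      have E0 : ∀ᶠ t in nhdsWithin 0 (Ioi (0:ℝ)), t ∈ Ioi (0:ℝ) :=
        self_mem_nhdsWithin
      obtain ⟨t, ht0, h1, h2, h3⟩ := (E0.and (E1.and (E2.and E3))).exists
      have ht0' : (0:ℝ) < t := ht0
      have hgtj : g t j = x j + t := by simp [hgdef]
      have hgti : ∀ i, i ≠ j → g t i = y i := by intro i h; simp [hgdef, h]
      refine ih (g t) ?_ ?_ ?_ ?_
      · intro i
        by_cases h : i = j
        · subst h; rw [hgtj]; exact ⟨by linarith [hxj.1], h2⟩
        · rw [hgti i h]; exact hy1 i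
      · intro i
        by_cases h : i = j
        · subst h; rw [hgtj]; linarith
        · rw [hgti i h]; exact hy2 i
      · intro i
        by_cases h : i = j
        · subst h; rw [hgtj]; intro _; exact h1
        · rw [hgti i h]; exact h3 i
      · have hsub : Finset.univ.filter (fun i => g t i = x i) ⊆
            (Finset.univ.filter (fun i => y i = x i)).erase j := by
          intro i hi
          rw [Finset.mem_filter] at hi
          rw [Finset.mem_erase]
          constructor
          · intro h
            subst h
            rw [hgtj] at hi
            linarith [hi.2]
          · rw [Finset.mem_filter]
            refine ⟨Finset.mem_univ i, ?_⟩
            have hne : i ≠ j := by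
              intro h
              subst h
              rw [hgtj] at hi
              linarith [hi.2]
            rw [← hgti i hne]
            exact hi.2
        have hjmem : j ∈ Finset.univ.filter (fun i => y i = x i) := by simp [hj1]
        have := Finset.card_le_card hsub
        rw [Finset.card_erase_of_mem hjmem] at this
        omega

/-- **A fixed-point–style technical lemma.**
Let `f : (0,1]ⁿ → (0,1]ⁿ` be continuous. For every `x ∈ (0,1)ⁿ` there is a
`y ∈ (0,1)ⁿ` such that for every coordinate `i`: if `f(y)_i > y_i` then
`y_i > x_i`, and if `f(y)_i ≤ y_i` then `y_i = x_i`. -/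
theorem continuous_increase_or_fix (n : ℕ) (hn : 1 ≤ n)
    (f : (Fin n → ℝ) → (Fin n → ℝ))
    (hmap : ∀ y : Fin n → ℝ, (∀ i, y i ∈ Set.Ioc (0 : ℝ) 1) →
      ∀ i, f y i ∈ Set.Ioc (0 : ℝ) 1)
    (hcont : ContinuousOn f {y : Fin n → ℝ | ∀ i, y i ∈ Set.Ioc (0 : ℝ) 1})
    (x : Fin n → ℝ) (hx : ∀ i, x i ∈ Set.Ioo (0 : ℝ) 1) :
    ∃ y : Fin n → ℝ, (∀ i, y i ∈ Set.Ioo (0 : ℝ) 1) ∧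
      ∀ i, (y i < f y i → x i < y i) ∧ (f y i ≤ y i → y i = x i) := by
  refine continuous_increase_or_fix_aux n f hcont x hx n x hx
    (fun i => le_refl _) (fun i h => absurd h (lt_irrefl _)) ?_
  calc (Finset.univ.filter (fun i => x i = x i)).card
      ≤ (Finset.univ : Finset (Fin n)).card := Finset.card_filter_le _ _
    _ = n := by simp
end
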